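/- arXiv:1910.04600 — 3 statements merged into one kernel-verified Lean document; each statement's English description precedes it below -/
import Mathlib

section
/- Let Z be a finite multiset of natural numbers and define the sequence v : ℕ → ℕ by v 0 = 0 and v (p+1) = v p / 2 + (Z.map (fun z => if Nat.testBit z p then 1 else 0)).sum. Then for all p ≥ 1, v p = (Z.map (fun z => z % 2^p)).sum / 2^(p-1). -/
private lemma elem_split (z p : ℕ) :
    z % 2 ^ (p + 1) = z % 2 ^ p + 2 ^ p * (if Nat.testBit z p then 1 else 0) := by
  simp only [Nat.testBit_eq_decide_div_mod_eq]
  rcases Nat.mod_two_eq_zero_or_one (z / 2 ^ p) with h1 | h1 <;>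
    simp [Nat.mod_pow_succ, h1]

private lemma sum_split (Z : Multiset ℕ) (p : ℕ) :
    (Z.map (fun z => z % 2 ^ (p + 1))).sum =
      (Z.map (fun z => z % 2 ^ p)).sum +
        2 ^ p * (Z.map (fun z => if Nat.testBit z p then 1 else 0)).sum := by
  induction Z using Multiset.induction with
  | empty => simp
  | cons a s ih => simp [ih, elem_split a p]; split_ifs <;> ring

theorem probe_invariant (Z : Multiset ℕ) (v : ℕ → ℕ) (h0 : v 0 = 0)
    (hs : ∀ p, v (p + 1) =
      v p / 2 + (Z.map (fun z => if Nat.testBit z p then 1 else 0)).sum) :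
    ∀ p, 1 ≤ p → v p = (Z.map (fun z => z % 2 ^ p)).sum / 2 ^ (p - 1) := by
  intro p hp
  induction p with
  | zero => omega
  | succ n ih =>
    rcases Nat.eq_zero_or_pos n with rfl | hn
    · rw [hs 0, h0]
      simp only [Nat.zero_div, zero_add]
      norm_num
      congr 1
      apply Multiset.map_congr rfl
      intro z _
      rcases Nat.mod_two_eq_zero_or_one z with h1 | h1 <;> simp [h1]
    · rw [hs n, ih hn, sum_split Z n]
      have hpred : n - 1 + 1 = n := Nat.succ_pred_eq_of_pos hn
      rw [Nat.div_div_eq_div_mul, ← pow_succ, hpred]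
      have h1 : n + 1 - 1 = n := rfl
      rw [h1, Nat.add_mul_div_left _ _ (by positivity : 0 < (2:ℕ)^n)]
end

section
/- Let n ∈ ℕ and let S be a multiset over {0, 1, …, n} (representing exponents of powers of two) such that every i < n occurs in S with multiplicity at most 1. If the value ∑_{i ∈ S} 2^i is at most W · (2^n − 1) for some W ∈ ℕ, then the cardinality of S is at most W + n. -/
/-!
Split `S` into the copies of `n` and the rest. The rest consists of distinct exponents below
`n`, so there are at most `n` of them. The copies of `n` alone contribute `count n S * 2 ^ n` to
the value, which is at most `W * (2 ^ n - 1) ≤ W * 2 ^ n`, so there are at most `W` of them.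
-/

namespace Multiset

variable {α : Type*}

theorem count_nsmul_le_sum_map {M : Type*} [DecidableEq α] [AddCommMonoid M] [PartialOrder M]
    [CanonicallyOrderedAdd M] (s : Multiset α) (f : α → M) (a : α) :
    s.count a • f a ≤ (s.map f).sum := by
  obtain ⟨t, hs⟩ := exists_add_of_le (le_count_iff_replicate_le.mp (le_refl (s.count a)))
  calc s.count a • f a = ((replicate (s.count a) a).map f).sum := by
        rw [map_replicate, sum_replicate]
    _ ≤ ((replicate (s.count a) a).map f).sum + (t.map f).sum := le_self_add
    _ = (s.map f).sum := by rw [← sum_add, ← map_add, ← hs]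

theorem countP_le_card_of_count_le_one [DecidableEq α] {p : α → Prop} [DecidablePred p]
    {s : Multiset α} {t : Finset α} (hmem : ∀ a ∈ s, p a → a ∈ t)
    (hcount : ∀ a ∈ t, s.count a ≤ 1) : s.countP p ≤ t.card := by
  have hnodup : (s.filter p).Nodup := by
    refine nodup_iff_count_le_one.mpr fun a => ?_
    by_cases ha : a ∈ t
    · exact (count_le_of_le a (filter_le p s)).trans (hcount a ha)
    · rw [count_eq_zero_of_notMem fun h => ha (hmem a (mem_of_mem_filter h) (of_mem_filter h))]
      exact zero_le_one
  have hsub : s.filter p ≤ t.val :=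
    (le_iff_subset hnodup).mpr fun a ha => hmem a (mem_of_mem_filter ha) (of_mem_filter ha)
  rw [countP_eq_card_filter]
  exact card_le_card hsub

end Multiset

theorem clean_card_bound (n W : ℕ) (S : Multiset ℕ)
    (hle : ∀ i ∈ S, i ≤ n)
    (hcount : ∀ i, i < n → S.count i ≤ 1)
    (hval : (S.map (fun i => 2 ^ i)).sum ≤ W * (2 ^ n - 1)) :
    Multiset.card S ≤ W + n := by
  have htop : S.count n ≤ W := by
    have h : S.count n * 2 ^ n ≤ W * 2 ^ n :=
      calc S.count n * 2 ^ n ≤ (S.map (fun i => 2 ^ i)).sum := S.count_nsmul_le_sum_map _ n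
        _ ≤ W * (2 ^ n - 1) := hval
        _ ≤ W * 2 ^ n := Nat.mul_le_mul_left W (Nat.sub_le _ _)
    exact Nat.le_of_mul_le_mul_right h (Nat.two_pow_pos n)
  have hrest : S.countP (fun i => ¬ n = i) ≤ n := by
    simpa using Multiset.countP_le_card_of_count_le_one (t := Finset.range n)
      (fun i hi hne => Finset.mem_range.mpr ((hle i hi).lt_of_ne (Ne.symm hne)))
      (fun i hi => hcount i (Finset.mem_range.mp hi))
  calc Multiset.card S = S.count n + S.countP (fun i => ¬ n = i) := S.card_eq_countP_add_countP _
    _ ≤ W + n := Nat.add_le_add htop hrest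
end

section
/- Consider the following process on a population of N ≥ 1 agents, each holding a number in {1, …, ℓ}, all initially holding 1: a step picks two agents holding the same value i < ℓ and increments one of them to i+1. Then in any maximal sequence of steps (i.e., from any terminal configuration), for every j ∈ {1, …, min(N, ℓ)} at least one agent holds value j, and if N < ℓ then every agent holds a distinct value and no agent holds a value greater than N. -/
/-!
A step keeps the number of agents and keeps the set of occupied levels an initial segment
`{1, …, m}`: a step at level `i` needs two agents there, so level `i` stays occupied, and the new
level `i + 1` is at most `m + 1`. In a terminal configuration each level below `ℓ` holds at most
one agent. Hence if `m < ℓ` the agents hold pairwise distinct values and `N = m`; if `m ≥ ℓ`, every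
level up to `ℓ` is occupied and `N ≥ m ≥ ℓ`.
-/

def countStep (ℓ : ℕ) (M M' : Multiset ℕ) : Prop :=
  ∃ i, 1 ≤ i ∧ i < ℓ ∧ 2 ≤ M.count i ∧ M' = M.erase i + {i + 1}

theorem Multiset.toFinset_erase_of_one_lt_count {α : Type*} [DecidableEq α] {s : Multiset α}
    {a : α} (h : 1 < s.count a) : (s.erase a).toFinset = s.toFinset := by
  ext x
  rcases eq_or_ne x a with rfl | hx
  · simp only [Multiset.mem_toFinset, ← Multiset.count_pos, Multiset.count_erase_self]
    omega
  · simp [Multiset.mem_erase_of_ne hx]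

namespace countStep

variable {ℓ : ℕ} {M M' : Multiset ℕ}

theorem card_eq (h : countStep ℓ M M') : Multiset.card M' = Multiset.card M := by
  obtain ⟨i, -, -, hi, rfl⟩ := h
  have : i ∈ M := Multiset.count_pos.mp (by omega)
  rw [Multiset.card_add, Multiset.card_singleton, Multiset.card_erase_add_one this]

theorem exists_toFinset_eq_Icc {m : ℕ} (h : countStep ℓ M M')
    (hM : M.toFinset = Finset.Icc 1 m) : ∃ m', M'.toFinset = Finset.Icc 1 m' := by
  obtain ⟨i, hi, -, hcount, rfl⟩ := h
  have him : i ≤ m := by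
    have : i ∈ M.toFinset := Multiset.mem_toFinset.mpr (Multiset.count_pos.mp (by omega))
    exact (Finset.mem_Icc.mp (hM ▸ this)).2
  rw [Multiset.toFinset_add, Multiset.toFinset_erase_of_one_lt_count hcount, hM,
    Multiset.toFinset_singleton, Finset.union_singleton]
  rcases him.lt_or_eq with him | rfl
  · exact ⟨m, Finset.insert_eq_of_mem (Finset.mem_Icc.mpr ⟨by omega, him⟩)⟩
  · exact ⟨i + 1, Finset.insert_Icc_right_eq_Icc_add_one (by omega)⟩

end countStep

theorem card_eq_and_exists_toFinset_eq_Icc_of_reachable {ℓ N : ℕ} {M : Multiset ℕ}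
    (h : Relation.ReflTransGen (countStep ℓ) (Multiset.replicate N 1) M) :
    Multiset.card M = N ∧ ∃ m, M.toFinset = Finset.Icc 1 m := by
  induction h with
  | refl =>
    refine ⟨Multiset.card_replicate N 1, min N 1, ?_⟩
    rw [Multiset.toFinset_replicate]
    rcases N with _ | N <;> simp
  | tail _ hstep ih =>
    obtain ⟨hcard, m, hM⟩ := ih
    exact ⟨hstep.card_eq.trans hcard, hstep.exists_toFinset_eq_Icc hM⟩

theorem nodup_of_terminal_of_toFinset_eq_Icc {ℓ m : ℕ} {M : Multiset ℕ}
    (hterm : ∀ M', ¬ countStep ℓ M M') (hM : M.toFinset = Finset.Icc 1 m) (hm : m < ℓ) :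
    M.Nodup := by
  refine Multiset.nodup_iff_count_le_one.mpr fun i => ?_
  by_contra! hi
  have hmem : i ∈ Finset.Icc 1 m :=
    hM ▸ Multiset.mem_toFinset.mpr (Multiset.count_pos.mp (by omega))
  obtain ⟨hi1, him⟩ := Finset.mem_Icc.mp hmem
  exact hterm _ ⟨i, hi1, by omega, hi, rfl⟩

theorem counting_phase_general (N ℓ : ℕ) (M : Multiset ℕ)
    (hreach : Relation.ReflTransGen (countStep ℓ) (Multiset.replicate N 1) M)
    (hterm : ∀ M', ¬ countStep ℓ M M') :
    (∀ j, 1 ≤ j → j ≤ min N ℓ → j ∈ M) ∧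
      (N < ℓ → (∀ j, M.count j ≤ 1) ∧ ∀ j ∈ M, j ≤ N) := by
  obtain ⟨rfl, m, hM⟩ := card_eq_and_exists_toFinset_eq_Icc_of_reachable hreach
  have hmem (j : ℕ) : j ∈ M ↔ 1 ≤ j ∧ j ≤ m := by
    rw [← Multiset.mem_toFinset, hM, Finset.mem_Icc]
  have hm_le : m ≤ Multiset.card M := by
    simpa [hM] using M.toFinset_card_le
  have hdistinct (hm : m < ℓ) : M.Nodup ∧ Multiset.card M = m := by
    have hnd := nodup_of_terminal_of_toFinset_eq_Icc hterm hM hm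
    refine ⟨hnd, ?_⟩
    simpa [hM] using (Multiset.toFinset_card_of_nodup hnd).symm
  refine ⟨fun j hj1 hj => (hmem j).mpr ⟨hj1, ?_⟩, fun hN => ?_⟩
  · rcases lt_or_ge m ℓ with hm | hm
    · have := (hdistinct hm).2; omega
    · omega
  · obtain ⟨hnd, hcard⟩ := hdistinct (by omega)
    exact ⟨Multiset.nodup_iff_count_le_one.mp hnd, fun j hj => hcard ▸ ((hmem j).mp hj).2⟩

theorem counting_phase (N ℓ : ℕ) (hN : 1 ≤ N) (M : Multiset ℕ)
    (hreach : Relation.ReflTransGen (countStep ℓ) (Multiset.replicate N 1) M)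
    (hterm : ∀ M', ¬ countStep ℓ M M') :
    (∀ j, 1 ≤ j → j ≤ min N ℓ → j ∈ M) ∧
      (N < ℓ → (∀ j, M.count j ≤ 1) ∧ ∀ j ∈ M, j ≤ N) :=
  counting_phase_general N ℓ M hreach hterm
end
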